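/- arXiv:1005.1256 — 2 statements merged into one kernel-verified Lean document; each statement's English description precedes it below -/
import Mathlib

section
/- Let G be an unmixed bipartite graph on {x_1,...,x_n} ∪ {y_1,...,y_n}, n ≥ 1, without isolated vertices, satisfying conditions (a) and (b). Then all maximal chains of the lattice L_G (the lattice of minimal vertex covers of G) have the same length. -/
/-- `C` is a vertex cover of the subgraph of the bipartite graph with
edge relation `E` (edges `{x i, y j}` for `E i j`) induced on the vertices
`{x i, y i : i ∈ F}`. -/
def IsCoverOn (n : ℕ) (E : Fin n → Fin n → Prop) (F : Set (Fin n))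
    (C : Set (Fin n ⊕ Fin n)) : Prop :=
  (∀ v ∈ C, Sum.elim (· ∈ F) (· ∈ F) v) ∧
  (∀ i ∈ F, ∀ j ∈ F, E i j → Sum.inl i ∈ C ∨ Sum.inr j ∈ C)

/-- `C` is a minimal vertex cover of the induced subgraph on `F`. -/
def IsMinCoverOn (n : ℕ) (E : Fin n → Fin n → Prop) (F : Set (Fin n))
    (C : Set (Fin n ⊕ Fin n)) : Prop :=
  IsCoverOn n E F C ∧ ∀ D ⊂ C, ¬ IsCoverOn n E F D

/-- The vertex set `{x k : k ∈ α} ∪ {y k : k ∈ F \ α}` attached to `α ⊆ F`. -/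
def coverSetOn (n : ℕ) (F α : Set (Fin n)) : Set (Fin n ⊕ Fin n) :=
  (Sum.inl '' α) ∪ (Sum.inr '' (F \ α))

/-- The lattice `L_{G_F}` of the induced subgraph `G_F`: those `α ⊆ F` whose
associated vertex set is a minimal vertex cover of `G_F`. -/
def LGF (n : ℕ) (E : Fin n → Fin n → Prop) (F : Set (Fin n)) : Set (Set (Fin n)) :=
  {α | α ⊆ F ∧ IsMinCoverOn n E F (coverSetOn n F α)}

/-- A maximal chain of the lattice `L_{G_F}`. -/
def IsMaxChain' (n : ℕ) (E : Fin n → Fin n → Prop) (F : Set (Fin n))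
    (c : Set (Set (Fin n))) : Prop :=
  c ⊆ LGF n E F ∧ IsChain (· ⊆ ·) c ∧
    ∀ c', c' ⊆ LGF n E F → IsChain (· ⊆ ·) c' → c ⊆ c' → c' = c

/-!
By (a) and (b) the relation `E` is a preorder on the indices, and `α` lies in `L_G` exactly when
it is down-closed (`E i j` and `j ∈ α` force `i ∈ α`). Counting the `E`-equivalence classes met
by `α` gives a rank on `L_G` that strictly increases along inclusions. Between two comparable
lower sets there is always one of rank exactly one more than the smaller: add the predecessors of
a minimal element of the difference, which are either already present or equivalent to it. Hence
a maximal chain runs from `∅` to the full set through every rank once, and its length is the number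
of classes.
-/

open Set

section RankedChains

variable {α : Type*} [PartialOrder α] {L c : Set α} {f : α → ℕ}

lemma IsChain.le_of_strictMonoOn (hc : IsChain (· ≤ ·) c) (hf : StrictMonoOn f c)
    {x y : α} (hx : x ∈ c) (hy : y ∈ c) (hxy : f x ≤ f y) : x ≤ y := by
  rcases eq_or_ne x y with rfl | hne
  · exact le_rfl
  refine (hc hx hy hne).resolve_right fun hyx => ?_
  exact (hf hy hx (hyx.lt_of_ne hne.symm)).not_ge hxy

lemma IsChain.injOn_of_strictMonoOn (hc : IsChain (· ≤ ·) c) (hf : StrictMonoOn f c) :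
    InjOn f c := fun _ hx _ hy h =>
  (hc.le_of_strictMonoOn hf hx hy h.le).antisymm (hc.le_of_strictMonoOn hf hy hx h.ge)

lemma Maximal.mem_of_forall_comparable (hc : Maximal (fun d => d ⊆ L ∧ IsChain (· ≤ ·) d) c)
    {x : α} (hxL : x ∈ L) (hx : ∀ y ∈ c, x ≤ y ∨ y ≤ x) : x ∈ c :=
  hc.2 ⟨insert_subset hxL hc.1.1, hc.1.2.insert fun y hy _ => hx y hy⟩ (subset_insert x c)
    (mem_insert x c)

theorem Maximal.ncard_eq_of_rank (hc : Maximal (fun d => d ⊆ L ∧ IsChain (· ≤ ·) d) c)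
    {bot top : α} (hbot : IsLeast L bot) (htop : IsGreatest L top) (hf : StrictMonoOn f L)
    (hstep : ∀ a ∈ L, ∀ b ∈ L, a < b → ∃ d ∈ L, a < d ∧ d ≤ b ∧ f d = f a + 1) :
    c.ncard = f top + 1 - f bot := by
  obtain ⟨hcL, hchain⟩ := hc.1
  have hfc : StrictMonoOn f c := hf.mono hcL
  have hinj : InjOn f c := hchain.injOn_of_strictMonoOn hfc
  have hbot_mem : bot ∈ c :=
    hc.mem_of_forall_comparable hbot.1 fun y hy => .inl (hbot.2 (hcL hy))
  have htop_mem : top ∈ c :=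
    hc.mem_of_forall_comparable htop.1 fun y hy => .inr (htop.2 (hcL hy))
  have himage_sub : f '' c ⊆ Icc (f bot) (f top) := by
    rintro _ ⟨y, hy, rfl⟩
    exact ⟨hf.monotoneOn hbot.1 (hcL hy) (hbot.2 (hcL hy)),
      hf.monotoneOn (hcL hy) htop.1 (htop.2 (hcL hy))⟩
  have hfin : c.Finite := .of_finite_image ((finite_Icc _ _).subset himage_sub) hinj
  have hsucc : ∀ m < f top, m ∈ f '' c → m + 1 ∈ f '' c := by
    rintro _ hm ⟨a, ha, rfl⟩
    obtain ⟨b, ⟨hb, hab⟩, hbmin⟩ :=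
      exists_min_image {y ∈ c | f a < f y} f (hfin.subset (sep_subset _ _)) ⟨top, htop_mem, hm⟩
    have hab' : a < b :=
      (hchain.le_of_strictMonoOn hfc ha hb hab.le).lt_of_ne (by rintro rfl; exact hab.false)
    obtain ⟨d, hdL, had, hdb, hd⟩ := hstep a (hcL ha) b (hcL hb) hab'
    refine ⟨d, hc.mem_of_forall_comparable hdL fun y hy => ?_, hd⟩
    rcases le_or_gt (f y) (f a) with hya | hay
    · exact .inr ((hchain.le_of_strictMonoOn hfc hy ha hya).trans had.le)
    · exact .inl (hdb.trans (hchain.le_of_strictMonoOn hfc hb hy (hbmin y ⟨hy, hay⟩)))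
  have hall : ∀ m, f bot ≤ m → m ≤ f top → m ∈ f '' c := by
    intro m hlo
    induction m, hlo using Nat.le_induction with
    | base => exact fun _ => mem_image_of_mem f hbot_mem
    | succ m _ ih => exact fun hm => hsucc m hm (ih (Nat.le_of_succ_le hm))
  have himage : f '' c = Icc (f bot) (f top) :=
    himage_sub.antisymm fun m hm => hall m hm.1 hm.2
  rw [← hinj.ncard_image, himage, ncard_Icc_nat]

end RankedChains

section DownClosed

variable {ι : Type*} {r : ι → ι → Prop} {s t : Set ι} {x : ι}

def IsDownClosed (r : ι → ι → Prop) (s : Set ι) : Prop := ∀ ⦃i j⦄, r i j → j ∈ s → i ∈ s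

lemma isDownClosed_empty : IsDownClosed r ∅ := fun _ _ _ h => h

lemma isDownClosed_univ : IsDownClosed r univ := fun _ _ _ _ => trivial

variable [IsPreorder ι r]

noncomputable def classRank (r : ι → ι → Prop) [IsPreorder ι r] (s : Set ι) : ℕ :=
  (toAntisymmetrization r '' s).ncard

lemma IsDownClosed.toAntisymmetrization_notMem_image (hs : IsDownClosed r s) (hx : x ∉ s) :
    toAntisymmetrization r x ∉ toAntisymmetrization r '' s := by
  rintro ⟨y, hy, hyx⟩
  exact hx (hs (Quotient.exact hyx).2 hy)

lemma IsDownClosed.classRank_lt_classRank [Finite ι] (hs : IsDownClosed r s) (hst : s ⊂ t) :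
    classRank r s < classRank r t := by
  obtain ⟨x, hxt, hxs⟩ := exists_of_ssubset hst
  refine ncard_lt_ncard ⟨image_mono hst.subset, fun h => ?_⟩ (toFinite _)
  exact hs.toAntisymmetrization_notMem_image hxs (h (mem_image_of_mem _ hxt))

lemma IsDownClosed.union_predecessors (hs : IsDownClosed r s) :
    IsDownClosed r (s ∪ {y | r y x}) := by
  rintro i j hij (hj | hj)
  · exact .inl (hs hij hj)
  · exact .inr (trans_of r hij hj)

lemma IsDownClosed.classRank_union_predecessors [Finite ι] (hs : IsDownClosed r s)
    (hxs : x ∉ s) (hx : ∀ y, r y x → y ∈ s ∨ r x y) :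
    classRank r (s ∪ {y | r y x}) = classRank r s + 1 := by
  have himage : toAntisymmetrization r '' (s ∪ {y | r y x}) =
      insert (toAntisymmetrization r x) (toAntisymmetrization r '' s) := by
    refine (image_union _ _ _).trans (Set.ext fun q => ?_)
    constructor
    · rintro (hq | ⟨y, hyx, rfl⟩)
      · exact .inr hq
      rcases hx y hyx with hy | hxy
      · exact .inr (mem_image_of_mem _ hy)
      · exact .inl (Quotient.sound ⟨hyx, hxy⟩)
    · rintro (rfl | hq)
      · exact .inr (mem_image_of_mem _ (refl_of r x))
      · exact .inl hq
  unfold classRank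
  rw [himage, ncard_insert_of_notMem (hs.toAntisymmetrization_notMem_image hxs)]

lemma Set.Nonempty.exists_rel_minimal [Finite ι] (hs : s.Nonempty) :
    ∃ x ∈ s, ∀ y ∈ s, r y x → r x y := by
  obtain ⟨x, hx, hmin⟩ := exists_min_image s (fun x => {y | r y x}.ncard) (toFinite _) hs
  refine ⟨x, hx, fun y hy hyx => by_contra fun hxy => (hmin y hy).not_gt ?_⟩
  exact ncard_lt_ncard ⟨fun z hzy => trans_of r hzy hyx, fun h => hxy (h (refl_of r x))⟩
    (toFinite _)

lemma IsDownClosed.exists_classRank_eq_succ [Finite ι] (hs : IsDownClosed r s)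
    (ht : IsDownClosed r t) (hst : s ⊂ t) :
    ∃ u, IsDownClosed r u ∧ s ⊂ u ∧ u ⊆ t ∧ classRank r u = classRank r s + 1 := by
  obtain ⟨x, ⟨hxt, hxs⟩, hmin⟩ := (nonempty_of_ssubset hst).exists_rel_minimal (r := r)
  have hx : ∀ y, r y x → y ∈ s ∨ r x y := fun y hyx =>
    (em (y ∈ s)).imp_right fun hys => hmin y ⟨ht hyx hxt, hys⟩ hyx
  refine ⟨s ∪ {y | r y x}, hs.union_predecessors, ?_, ?_, hs.classRank_union_predecessors hxs hx⟩
  · exact (ssubset_iff_of_subset subset_union_left).2 ⟨x, .inr (refl_of r x), hxs⟩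
  · exact union_subset hst.subset fun y hyx => ht hyx hxt

end DownClosed

section VertexCovers

variable {n : ℕ} {E : Fin n → Fin n → Prop}

lemma isPreorder_of_refl_of_distinct {ι : Type*} {r : ι → ι → Prop} (hr : ∀ i, r i i)
    (h : ∀ i j k, i ≠ j → j ≠ k → i ≠ k → r i j → r j k → r i k) : IsPreorder ι r where
  refl := hr
  trans i j k hij hjk := by
    rcases eq_or_ne i j with rfl | hne₁
    · exact hjk
    rcases eq_or_ne j k with rfl | hne₂
    · exact hij
    rcases eq_or_ne i k with rfl | hne₃
    · exact hr i
    exact h i j k hne₁ hne₂ hne₃ hij hjk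

@[simp]
lemma inl_mem_coverSetOn_univ {α : Set (Fin n)} {i : Fin n} :
    Sum.inl i ∈ coverSetOn n univ α ↔ i ∈ α := by
  simp [coverSetOn]

@[simp]
lemma inr_mem_coverSetOn_univ {α : Set (Fin n)} {j : Fin n} :
    Sum.inr j ∈ coverSetOn n univ α ↔ j ∉ α := by
  simp [coverSetOn]

/-- Minimality is automatic: the loops `{x i, y i}` force every cover to contain `x i` or `y i`,
and `coverSetOn` contains exactly one of them. -/
lemma mem_LGF_univ_iff (ha : ∀ i, E i i) {α : Set (Fin n)} :
    α ∈ LGF n E univ ↔ IsDownClosed E α := by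
  constructor
  · rintro ⟨-, ⟨-, hcov⟩, -⟩ i j hij hj
    simpa [hj] using hcov i trivial j trivial hij
  · intro hα
    refine ⟨subset_univ α, ⟨⟨fun v _ => by cases v <;> trivial, ?_⟩, ?_⟩⟩
    · intro i _ j _ hij
      by_cases hj : j ∈ α <;> simp [hj, hα hij]
    · rintro D hD ⟨-, hDcov⟩
      obtain ⟨v, hvC, hvD⟩ := exists_of_ssubset hD
      rcases v with i | i <;> rcases hDcov i trivial i trivial (ha i) with h | h
      · exact hvD h
      · exact inr_mem_coverSetOn_univ.1 (hD.subset h) (inl_mem_coverSetOn_univ.1 hvC)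
      · exact inr_mem_coverSetOn_univ.1 hvC (inl_mem_coverSetOn_univ.1 (hD.subset h))
      · exact hvD h

lemma IsMaxChain'.maximal {F : Set (Fin n)} {c : Set (Set (Fin n))} (h : IsMaxChain' n E F c) :
    Maximal (fun d => d ⊆ LGF n E F ∧ IsChain (· ≤ ·) d) c :=
  ⟨⟨h.1, h.2.1⟩, fun d hd hcd => (h.2.2 d hd.1 hd.2 hcd).le⟩

end VertexCovers

theorem stmt6_general (n : ℕ) (E : Fin n → Fin n → Prop)
    (ha : ∀ i, E i i)
    (hb : ∀ i j k : Fin n, i ≠ j → j ≠ k → i ≠ k → E i j → E j k → E i k)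
    (c₁ c₂ : Set (Set (Fin n)))
    (h₁ : IsMaxChain' n E Set.univ c₁) (h₂ : IsMaxChain' n E Set.univ c₂) :
    c₁.ncard = c₂.ncard := by
  have : IsPreorder (Fin n) E := isPreorder_of_refl_of_distinct ha hb
  have hL : LGF n E univ = {s | IsDownClosed E s} := ext fun _ => mem_LGF_univ_iff ha
  have hlen : ∀ c, IsMaxChain' n E univ c → c.ncard = classRank E univ + 1 - classRank E ∅ := by
    intro c hc
    have hmax := hc.maximal
    rw [hL] at hmax
    exact hmax.ncard_eq_of_rank ⟨isDownClosed_empty, fun _ _ => empty_subset _⟩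
      ⟨isDownClosed_univ, fun _ _ => subset_univ _⟩
      (fun _ hs _ _ hst => hs.classRank_lt_classRank hst)
      (fun _ hs _ ht hst => hs.exists_classRank_eq_succ ht hst)
  rw [hlen c₁ h₁, hlen c₂ h₂]

/-- Proposition 1.4 (last claim): all maximal chains of `L_G` have the same
length. -/
theorem stmt6 (n : ℕ) (hn : 1 ≤ n) (E : Fin n → Fin n → Prop)
    (ha : ∀ i, E i i)
    (hb : ∀ i j k : Fin n, i ≠ j → j ≠ k → i ≠ k → E i j → E j k → E i k)
    (c₁ c₂ : Set (Set (Fin n)))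
    (h₁ : IsMaxChain' n E Set.univ c₁) (h₂ : IsMaxChain' n E Set.univ c₂) :
    c₁.ncard = c₂.ncard :=
  stmt6_general n E ha hb c₁ c₂ h₁ h₂
end

section
/- Let F be a nonempty proper subset of [n] and G an unmixed bipartite graph with associated lattice L_G. For α in the lattice L_{G_{F̄}} of the induced subgraph on the complement of F, let δ_α = ∪ { γ ⊆ {p_i : i ∈ F} : α ∪ γ ∈ L_G }. Then α ∪ δ_α ∈ L_G, i.e., δ_α is the (unique) maximal subset γ of {p_i : i ∈ F} with α ∪ γ ∈ L_G. -/
lemma inl_mem_coverSetOn {n : ℕ} {F α : Set (Fin n)} {i : Fin n} :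
    Sum.inl i ∈ coverSetOn n F α ↔ i ∈ α := by
  simp [coverSetOn]

lemma inr_mem_coverSetOn {n : ℕ} {F α : Set (Fin n)} {i : Fin n} :
    Sum.inr i ∈ coverSetOn n F α ↔ i ∈ F \ α := by
  simp [coverSetOn]

/-- Characterization of membership in `LGF`. -/
lemma mem_LGF_iff {n : ℕ} {E : Fin n → Fin n → Prop} (ha : ∀ i, E i i)
    {F α : Set (Fin n)} :
    α ∈ LGF n E F ↔ α ⊆ F ∧ ∀ i ∈ F, ∀ j ∈ F, E i j → j ∈ α → i ∈ α := by
  constructor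
  · rintro ⟨hsub, ⟨⟨_, hcov⟩, _⟩⟩
    refine ⟨hsub, fun i hi j hj hij hjα => ?_⟩
    rcases hcov i hi j hj hij with h | h
    · exact inl_mem_coverSetOn.mp h
    · exact absurd (inr_mem_coverSetOn.mp h).2 (not_not.mpr hjα)
  · rintro ⟨hsub, hcl⟩
    have hcover : IsCoverOn n E F (coverSetOn n F α) := by
      constructor
      · rintro (v | v) hv
        · exact hsub (inl_mem_coverSetOn.mp hv)
        · exact (inr_mem_coverSetOn.mp hv).1
      · intro i hi j hj hij
        by_cases hjα : j ∈ α
        · exact Or.inl (inl_mem_coverSetOn.mpr (hcl i hi j hj hij hjα))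
        · exact Or.inr (inr_mem_coverSetOn.mpr ⟨hj, hjα⟩)
    refine ⟨hsub, hcover, ?_⟩
    rintro D ⟨hDsub, hDne⟩ ⟨_, hDcov⟩
    apply hDne
    rintro (v | v) hv
    · have hvα := inl_mem_coverSetOn.mp hv
      rcases hDcov v (hsub hvα) v (hsub hvα) (ha v) with h | h
      · exact h
      · exact absurd (inr_mem_coverSetOn.mp (hDsub h)).2 (not_not.mpr hvα)
    · have hvα := inr_mem_coverSetOn.mp hv
      rcases hDcov v hvα.1 v hvα.1 (ha v) with h | h
      · exact absurd (inl_mem_coverSetOn.mp (hDsub h)) hvα.2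
      · exact h

/-- For `∅ ≠ F ⊊ [n]` and `α ∈ L_{G_F̄}`, the union `δ_α` of all
`γ ⊆ {p i : i ∈ F}` with `α ∪ γ ∈ L_G` again satisfies `α ∪ δ_α ∈ L_G`;
i.e. `δ_α` is the unique maximal such subset. -/
theorem stmt8 (n : ℕ) (E : Fin n → Fin n → Prop)
    (ha : ∀ i, E i i)
    (hb : ∀ i j k : Fin n, i ≠ j → j ≠ k → i ≠ k → E i j → E j k → E i k)
    (F : Set (Fin n)) (hF : F.Nonempty) (hFne : F ≠ Set.univ)
    (α : Set (Fin n)) (hα : α ∈ LGF n E Fᶜ) :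
    let δα : Set (Fin n) := ⋃₀ {γ | γ ⊆ F ∧ α ∪ γ ∈ LGF n E Set.univ}
    α ∪ δα ∈ LGF n E Set.univ ∧
      ∀ γ ⊆ F, α ∪ γ ∈ LGF n E Set.univ → γ ⊆ δα := by
  intro δα
  have trans : ∀ i j k : Fin n, E i j → E j k → E i k := by
    intro i j k hij hjk
    by_cases h1 : i = j; · subst h1; exact hjk
    by_cases h2 : j = k; · subst h2; exact hij
    by_cases h3 : i = k; · subst h3; exact ha i
    exact hb i j k h1 h2 h3 hij hjk
  rw [mem_LGF_iff ha] at hα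
  obtain ⟨hαF, hαC⟩ := hα
  set B : Set (Fin n) := Fᶜ \ α with hB
  set S : Set (Fin n) := {j | ∀ i ∈ B, ¬ E i j} with hS
  set γ₀ : Set (Fin n) := S ∩ F with hγ₀def
  have hαS : α ⊆ S := fun j hj k hk hkj => hk.2 (hαC k hk.1 j (hαF hj) hkj hj)
  have hSunion : α ∪ γ₀ = S := by
    apply subset_antisymm
    · rintro j (h | h)
      · exact hαS h
      · exact h.1
    · intro j hj
      by_cases hjF : j ∈ F
      · exact Or.inr ⟨hj, hjF⟩
      · left; by_contra hjα
        exact hj j ⟨hjF, hjα⟩ (ha j)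
  have hγ₀ : γ₀ ∈ {γ : Set (Fin n) | γ ⊆ F ∧ α ∪ γ ∈ LGF n E Set.univ} := by
    refine ⟨Set.inter_subset_right, ?_⟩
    rw [mem_LGF_iff ha]
    refine ⟨Set.subset_univ _, ?_⟩
    intro i _ j _ hij hj
    rw [hSunion] at hj ⊢
    exact fun k hk hki => hj k hk (trans k i j hki hij)
  have hmax : ∀ γ ⊆ F, α ∪ γ ∈ LGF n E Set.univ → γ ⊆ γ₀ := by
    intro γ hγF hγL
    rw [mem_LGF_iff ha] at hγL
    intro j hj
    refine ⟨fun k hk hkj => ?_, hγF hj⟩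
    have : k ∈ α ∪ γ :=
      hγL.2 k (Set.mem_univ k) j (Set.mem_univ j) hkj (Or.inr hj)
    rcases this with h | h
    · exact hk.2 h
    · exact hk.1 (hγF h)
  have hδ : δα = γ₀ := by
    apply subset_antisymm
    · exact Set.sUnion_subset fun γ hγ => hmax γ hγ.1 hγ.2
    · exact Set.subset_sUnion_of_mem hγ₀
  refine ⟨?_, fun γ hγF hγL => Set.subset_sUnion_of_mem ⟨hγF, hγL⟩⟩
  rw [hδ]
  exact hγ₀.2
end
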